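/- arXiv:math/0111059 — 3 statements merged into one kernel-verified Lean document; each statement's English description precedes it below -/
import Mathlib

section
/- For all integers n ≥ k ≥ 1 and every π ∈ P(n,k): mak(π) = los(π) − rinv(F(π),π) + linv(O(π),π). -/
open Finset Polynomial

/-- A partition of `[n] = {1,…,n}` into `k` nonempty blocks `B₁-⋯-B_k`, indexed so that
`min B₁ < ⋯ < min B_k`, encoded by its restricted-growth word `w : Fin n → Fin k`
(the element `i+1` of `[n]` lies in the block `B_{w i + 1}`). -/
structure SetPartition (n k : ℕ) where
  w : Fin n → Fin k
  surj : Function.Surjective w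
  rgf : ∀ i : Fin n, ∀ c : Fin k, c < w i → ∃ j : Fin n, j < i ∧ w j = c

namespace SetPartition

variable {n k : ℕ}

instance : DecidableEq (SetPartition n k) := fun a b =>
  decidable_of_iff (a.w = b.w) (by cases a; cases b; simp)

noncomputable instance : Fintype (SetPartition n k) :=
  Fintype.ofInjective (fun π => π.w) (fun a b h => by cases a; cases b; simp_all)

/-- The set of openers (smallest elements of their blocks). -/
def openers (π : SetPartition n k) : Finset (Fin n) :=
  univ.filter fun i => ∀ j, j < i → π.w j ≠ π.w i

/-- The set of closers (largest elements of their blocks). -/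
def closers (π : SetPartition n k) : Finset (Fin n) :=
  univ.filter fun i => ∀ j, i < j → π.w j ≠ π.w i

/-- Closers that are not openers (`F_s`). -/
def closersOnly (π : SetPartition n k) : Finset (Fin n) := π.closers \ π.openers

/-- Openers that are not closers (`O_s`). -/
def openersOnly (π : SetPartition n k) : Finset (Fin n) := π.openers \ π.closers

/-- Elements that are neither openers nor closers (`P`, the transients). -/
def transients (π : SetPartition n k) : Finset (Fin n) :=
  univ \ (π.openers ∪ π.closers)

def ros (π : SetPartition n k) : ℕ :=
  ∑ i, (π.openers.filter fun j => j < i ∧ π.w i < π.w j).card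
def rob (π : SetPartition n k) : ℕ :=
  ∑ i, (π.openers.filter fun j => i < j ∧ π.w i < π.w j).card
def rcs (π : SetPartition n k) : ℕ :=
  ∑ i, (π.closers.filter fun j => j < i ∧ π.w i < π.w j).card
def rcb (π : SetPartition n k) : ℕ :=
  ∑ i, (π.closers.filter fun j => i < j ∧ π.w i < π.w j).card
def los (π : SetPartition n k) : ℕ :=
  ∑ i, (π.openers.filter fun j => j < i ∧ π.w j < π.w i).card
def lob (π : SetPartition n k) : ℕ :=
  ∑ i, (π.openers.filter fun j => i < j ∧ π.w j < π.w i).card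
def lcs (π : SetPartition n k) : ℕ :=
  ∑ i, (π.closers.filter fun j => j < i ∧ π.w j < π.w i).card
def lcb (π : SetPartition n k) : ℕ :=
  ∑ i, (π.closers.filter fun j => i < j ∧ π.w j < π.w i).card

def mak (π : SetPartition n k) : ℕ := π.ros + π.lcs
def mak' (π : SetPartition n k) : ℕ := π.lob + π.rcb
def lmak (π : SetPartition n k) : ℤ :=
  (n : ℤ) * ((k : ℤ) - 1) - ((π.los : ℤ) + (π.rcs : ℤ))
def lmak' (π : SetPartition n k) : ℤ :=
  (n : ℤ) * ((k : ℤ) - 1) - ((π.lcb : ℤ) + (π.rob : ℤ))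

/-- `rinv(b,π) = #{a : a < b, w_a > w_b}`. -/
def rinv (π : SetPartition n k) (b : Fin n) : ℕ :=
  (univ.filter fun a => a < b ∧ π.w b < π.w a).card

/-- `nrinv(b,π) = #{a : a > b, w_a > w_b}`. -/
def nrinv (π : SetPartition n k) (b : Fin n) : ℕ :=
  (univ.filter fun a => b < a ∧ π.w b < π.w a).card

/-- `linv(b,π) = #{a : a > b, w_a < w_b}`. -/
def linv (π : SetPartition n k) (b : Fin n) : ℕ :=
  (univ.filter fun a => b < a ∧ π.w a < π.w b).card

/-- `rinv(X,π) = Σ_{b ∈ X} rinv(b,π)`. -/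
def rinvSet (π : SetPartition n k) (X : Finset (Fin n)) : ℕ := ∑ b ∈ X, π.rinv b

/-- `linv(X,π) = Σ_{b ∈ X} linv(b,π)`. -/
def linvSet (π : SetPartition n k) (X : Finset (Fin n)) : ℕ := ∑ b ∈ X, π.linv b

/-- `g(B_c)`: the largest element of the block with index `c`. -/
def blockMax (π : SetPartition n k) (c : Fin k) : Fin n :=
  (univ.filter fun i => π.w i = c).max' (by
    obtain ⟨i, hi⟩ := π.surj c
    exact ⟨i, mem_filter.2 ⟨mem_univ i, hi⟩⟩)

/-- The block with index `c` is incomplete at stage `m`, i.e. it meets the first `m`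
elements of `[n]` but is not contained in them. -/
def IncompleteAt (π : SetPartition n k) (m : ℕ) (c : Fin k) : Prop :=
  (∃ j : Fin n, (j : ℕ) < m ∧ π.w j = c) ∧ ∃ j : Fin n, m ≤ (j : ℕ) ∧ π.w j = c

instance (π : SetPartition n k) (m : ℕ) : DecidablePred (π.IncompleteAt m) := fun c =>
  inferInstanceAs (Decidable
    ((∃ j : Fin n, (j : ℕ) < m ∧ π.w j = c) ∧ ∃ j : Fin n, m ≤ (j : ℕ) ∧ π.w j = c))

/-- `l_i(π)`: the number of blocks incomplete at stage `i-1`; here the element `i` of `[n]`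
is represented by the index `i - 1 : Fin n`, so the first `i - 1` elements are those with
index `< i`. -/
def lTrace (π : SetPartition n k) (i : Fin n) : ℕ :=
  (univ.filter fun c => π.IncompleteAt (i : ℕ) c).card

/-- `γ_i(π)`: one plus the number of blocks incomplete at stage `i` lying to the left of the
block containing `i`. -/
def gammaTrace (π : SetPartition n k) (i : Fin n) : ℕ :=
  1 + (univ.filter fun c => π.IncompleteAt ((i : ℕ) + 1) c ∧ c < π.w i).card

end SetPartition

/-- The `q`-Stirling numbers of the second kind `S_q(n,k) ∈ ℤ[q]`, with
`S_q(n,k) = q^{k-1} S_q(n-1,k-1) + [k]_q S_q(n-1,k)`, `S_q(0,0) = 1`, and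
`S_q(n,k) = 0` when exactly one of `n,k` is zero (whence also for `k > n`). -/
noncomputable def qStirling : ℕ → ℕ → Polynomial ℤ
  | 0, 0 => 1
  | 0, _ + 1 => 0
  | _ + 1, 0 => 0
  | n + 1, k + 1 =>
      X ^ k * qStirling n k + (∑ i ∈ Finset.range (k + 1), X ^ i) * qStirling n (k + 1)

/-!
Counting the pairs (opener `j`, later element `i` with `w i < w j`) in the two possible orders
gives `ros(π) = linv(O(π),π)`, and likewise `rinv(F(π),π) = lcb(π)`. The remaining terms
are both equal to `∑ᵢ (w i)`: since `w` is a bijection from the closers onto the blocks, the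
closers `j` with `w j < w i` number `w i` and each lies before or after `i`, which gives
`lcs(π) + lcb(π)`; by the restricted growth property the opener of every block `c < w i`
lies before `i`, which gives `los(π)`.
-/

namespace SetPartition

variable {n k : ℕ} (π : SetPartition n k)

theorem ros_eq_linvSet_openers : π.ros = π.linvSet π.openers :=
  sum_card_bipartiteAbove_eq_sum_card_bipartiteBelow _

theorem rinvSet_closers_eq_lcb : π.rinvSet π.closers = π.lcb :=
  (sum_card_bipartiteAbove_eq_sum_card_bipartiteBelow _).symm

theorem injOn_w_openers : Set.InjOn π.w π.openers := by
  intro a ha b hb hab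
  simp only [openers, coe_filter, mem_univ, true_and, Set.mem_ofPred_eq] at ha hb
  rcases lt_trichotomy a b with h | h | h
  · exact absurd hab (hb a h)
  · exact h
  · exact absurd hab.symm (ha b h)

theorem injOn_w_closers : Set.InjOn π.w π.closers := by
  intro a ha b hb hab
  simp only [closers, coe_filter, mem_univ, true_and, Set.mem_ofPred_eq] at ha hb
  rcases lt_trichotomy a b with h | h | h
  · exact absurd hab.symm (ha b h)
  · exact h
  · exact absurd hab (hb a h)

theorem exists_opener_le_of_w_eq (c : Fin k) :
    ∃ m ∈ π.openers, π.w m = c ∧ ∀ j, π.w j = c → m ≤ j := by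
  obtain ⟨m, hm, hmin⟩ := (univ.filter (π.w · = c)).exists_min_image id
    (let ⟨i, hi⟩ := π.surj c; ⟨i, mem_filter.2 ⟨mem_univ i, hi⟩⟩)
  have hwm : π.w m = c := (mem_filter.1 hm).2
  have hmin' : ∀ j, π.w j = c → m ≤ j := fun j hj => hmin j (mem_filter.2 ⟨mem_univ j, hj⟩)
  refine ⟨m, mem_filter.2 ⟨mem_univ m, fun j hj hjm => ?_⟩, hwm, hmin'⟩
  exact absurd (hmin' j (hjm.trans hwm)) (not_le.2 hj)

theorem exists_closer_of_w_eq (c : Fin k) : ∃ m ∈ π.closers, π.w m = c := by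
  obtain ⟨m, hm, hmax⟩ := (univ.filter (π.w · = c)).exists_max_image id
    (let ⟨i, hi⟩ := π.surj c; ⟨i, mem_filter.2 ⟨mem_univ i, hi⟩⟩)
  have hwm : π.w m = c := (mem_filter.1 hm).2
  refine ⟨m, mem_filter.2 ⟨mem_univ m, fun j hj hjm => ?_⟩, hwm⟩
  exact absurd (hmax j (mem_filter.2 ⟨mem_univ j, hjm.trans hwm⟩)) (not_le.2 hj)

theorem card_closers_filter_w_lt (v : Fin k) : #(π.closers.filter (π.w · < v)) = v := by
  rw [← card_range (v : ℕ)]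
  refine card_nbij (fun j => π.w j) (fun j hj => ?_) ?_ fun c hc => ?_
  · simpa using (mem_filter.1 hj).2
  · exact fun a ha b hb hab =>
      π.injOn_w_closers (mem_filter.1 ha).1 (mem_filter.1 hb).1 (Fin.val_injective hab)
  · have hcv : c < v := mem_range.1 hc
    obtain ⟨m, hm, hwm⟩ := π.exists_closer_of_w_eq ⟨c, hcv.trans v.isLt⟩
    exact ⟨m, mem_filter.2 ⟨hm, by rw [hwm]; exact hcv⟩, by simp [hwm]⟩

theorem card_openers_filter_lt_and_w_lt (i : Fin n) :
    #(π.openers.filter fun j => j < i ∧ π.w j < π.w i) = π.w i := by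
  rw [← card_range (π.w i : ℕ)]
  refine card_nbij (fun j => π.w j) (fun j hj => ?_) ?_ fun c hc => ?_
  · simpa using (mem_filter.1 hj).2.2
  · exact fun a ha b hb hab =>
      π.injOn_w_openers (mem_filter.1 ha).1 (mem_filter.1 hb).1 (Fin.val_injective hab)
  · have hc : c < π.w i := mem_range.1 hc
    have hci : (⟨c, hc.trans (π.w i).isLt⟩ : Fin k) < π.w i := hc
    obtain ⟨m, hm, hwm, hmin⟩ := π.exists_opener_le_of_w_eq _
    obtain ⟨j, hji, hwj⟩ := π.rgf i _ hci
    exact ⟨m, mem_filter.2 ⟨hm, (hmin j hwj).trans_lt hji, by rw [hwm]; exact hci⟩,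
      by simp [hwm]⟩

theorem los_eq_sum_w : π.los = ∑ i, (π.w i : ℕ) :=
  sum_congr rfl fun i _ => π.card_openers_filter_lt_and_w_lt i

theorem lcs_add_lcb_eq_sum_w : π.lcs + π.lcb = ∑ i, (π.w i : ℕ) := by
  rw [lcs, lcb, ← sum_add_distrib]
  refine sum_congr rfl fun i _ => ?_
  rw [← π.card_closers_filter_w_lt (π.w i), card_filter, card_filter, card_filter,
    ← sum_add_distrib]
  refine sum_congr rfl fun j _ => ?_
  rcases lt_trichotomy j i with h | rfl | h
  · simp [h, h.not_gt]
  · simp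
  · simp [h, h.not_gt]

end SetPartition

theorem mak_eq_los_rinv_linv_general (n k : ℕ) (π : SetPartition n k) :
    (π.mak : ℤ) = (π.los : ℤ) - (π.rinvSet π.closers : ℤ) + (π.linvSet π.openers : ℤ) := by
  have h : π.mak + π.rinvSet π.closers = π.los + π.linvSet π.openers := by
    rw [SetPartition.mak, π.ros_eq_linvSet_openers, π.rinvSet_closers_eq_lcb, add_assoc,
      π.lcs_add_lcb_eq_sum_w, π.los_eq_sum_w, add_comm]
  omega

/-- For all integers `n ≥ k ≥ 1` and every `π ∈ P(n,k)`:
`mak(π) = los(π) - rinv(F(π),π) + linv(O(π),π)`. -/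
theorem mak_eq_los_rinv_linv (n k : ℕ) (hk : 1 ≤ k) (hkn : k ≤ n) (π : SetPartition n k) :
    (π.mak : ℤ) = (π.los : ℤ) - (π.rinvSet π.closers : ℤ) + (π.linvSet π.openers : ℤ) :=
  mak_eq_los_rinv_linv_general n k π
end

section
/- For all integers n ≥ k ≥ 1 and every π ∈ P(n,k): mak'(π) = n(k−1) − los(π) − linv(F(π),π). -/
open Finset Polynomial

/-!
Fix `i`. Every block below that of `i` has exactly one opener and every block above it exactly
one closer, so splitting these according to whether they come before or after `i` gives
`lob_i + los_i = w_i - 1` and `rcb_i + rcs_i = k - w_i`. Summing over `i` yields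
`mak' + los + rcs = n(k - 1)`, and double counting the pairs (closer `j`, later element `a` in a
lower block) identifies `rcs` with `linv(F(π), π)`.
-/

section

variable {α β : Type*}

lemma Finset.card_filter_lt_add_card_filter_gt [LinearOrder α] (s : Finset α) (i : α)
    {p : α → Prop} [DecidablePred p] (hi : ¬ p i) :
    #{j ∈ s | j < i ∧ p j} + #{j ∈ s | i < j ∧ p j} = #{j ∈ s | p j} := by
  rw [← card_union_of_disjoint (disjoint_filter.2 fun j _ h h' => h.1.not_gt h'.1)]
  congr 1
  ext j
  simp only [mem_union, mem_filter]
  constructor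
  · rintro (⟨hs, -, hp⟩ | ⟨hs, -, hp⟩) <;> exact ⟨hs, hp⟩
  · rintro ⟨hs, hp⟩
    rcases lt_trichotomy j i with h | rfl | h
    · exact Or.inl ⟨hs, h, hp⟩
    · exact absurd hp hi
    · exact Or.inr ⟨hs, h, hp⟩

lemma Finset.card_filter_comp_of_bijOn [Fintype β] {s : Finset α} {f : α → β}
    (hf : Set.BijOn f s Set.univ) (p : β → Prop) [DecidablePred p] :
    #{a ∈ s | p (f a)} = #{b | p b} := by
  refine card_nbij f (fun a ha => by simpa using (mem_filter.1 ha).2)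
    (hf.injOn.mono fun a ha => (mem_filter.1 ha).1) fun b hb => ?_
  obtain ⟨a, ha, rfl⟩ := hf.surjOn (Set.mem_univ b)
  exact ⟨a, mem_filter.2 ⟨ha, by simpa using hb⟩, rfl⟩

end

namespace SetPartition

variable {n k : ℕ} (π : SetPartition n k)

lemma bijOn_w_openers : Set.BijOn π.w π.openers Set.univ := by
  refine ⟨Set.mapsTo_univ _ _, fun j₁ h₁ j₂ h₂ hw => ?_, fun c _ => ?_⟩
  · simp only [coe_filter, openers, mem_univ, true_and, Set.mem_ofPred_eq] at h₁ h₂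
    exact le_antisymm (not_lt.1 fun h => h₁ _ h hw.symm) (not_lt.1 fun h => h₂ _ h hw)
  · obtain ⟨j₀, hj₀⟩ := π.surj c
    obtain ⟨j, hj, hmin⟩ := exists_min_image {j | π.w j = c} id ⟨j₀, by simpa using hj₀⟩
    simp only [mem_filter, mem_univ, true_and, id] at hj hmin
    refine ⟨j, by simpa [openers] using fun i hi hw => (hmin i (hw.trans hj)).not_gt hi, hj⟩

lemma bijOn_w_closers : Set.BijOn π.w π.closers Set.univ := by
  refine ⟨Set.mapsTo_univ _ _, fun j₁ h₁ j₂ h₂ hw => ?_, fun c _ => ?_⟩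
  · simp only [coe_filter, closers, mem_univ, true_and, Set.mem_ofPred_eq] at h₁ h₂
    exact le_antisymm (not_lt.1 fun h => h₂ _ h hw) (not_lt.1 fun h => h₁ _ h hw.symm)
  · obtain ⟨j₀, hj₀⟩ := π.surj c
    obtain ⟨j, hj, hmax⟩ := exists_max_image {j | π.w j = c} id ⟨j₀, by simpa using hj₀⟩
    simp only [mem_filter, mem_univ, true_and, id] at hj hmax
    refine ⟨j, by simpa [closers] using fun i hi hw => (hmax i (hw.trans hj)).not_gt hi, hj⟩

lemma card_openers_w_lt (c : Fin k) : #{j ∈ π.openers | π.w j < c} = c :=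
  (card_filter_comp_of_bijOn π.bijOn_w_openers (· < c)).trans (by rw [filter_gt_eq_Iio]; simp)

lemma card_closers_w_gt (c : Fin k) : #{j ∈ π.closers | c < π.w j} = k - 1 - c :=
  (card_filter_comp_of_bijOn π.bijOn_w_closers (c < ·)).trans (by rw [filter_lt_eq_Ioi]; simp)

lemma rcs_eq_linvSet_closers : π.rcs = π.linvSet π.closers := by
  simp only [rcs, linvSet, linv, card_filter]
  exact sum_comm

lemma mak'_add_los_add_rcs : π.mak' + π.los + π.rcs + n = n * k := by
  have key (i : Fin n) :
      #{j ∈ π.openers | i < j ∧ π.w j < π.w i} + #{j ∈ π.closers | i < j ∧ π.w i < π.w j}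
        + #{j ∈ π.openers | j < i ∧ π.w j < π.w i}
        + #{j ∈ π.closers | j < i ∧ π.w i < π.w j} + 1 = k := by
    have ho := card_filter_lt_add_card_filter_gt π.openers i
      (p := fun j => π.w j < π.w i) (lt_irrefl _)
    have hc := card_filter_lt_add_card_filter_gt π.closers i
      (p := fun j => π.w i < π.w j) (lt_irrefl _)
    rw [card_openers_w_lt] at ho
    rw [card_closers_w_gt] at hc
    have := (π.w i).isLt
    omega
  calc π.mak' + π.los + π.rcs + n = ∑ i : Fin n, k := by
        rw [← sum_congr rfl fun i _ => key i]
        simp only [mak', lob, rcb, los, rcs, sum_add_distrib, sum_const, card_univ,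
          Fintype.card_fin, smul_eq_mul, mul_one]
    _ = n * k := by simp

end SetPartition

theorem mak'_eq_los_linv_general (n k : ℕ) (π : SetPartition n k) :
    (π.mak' : ℤ) =
      (n : ℤ) * ((k : ℤ) - 1) - (π.los : ℤ) - (π.linvSet π.closers : ℤ) := by
  have h := congrArg (Nat.cast : ℕ → ℤ) π.mak'_add_los_add_rcs
  rw [π.rcs_eq_linvSet_closers] at h
  push_cast at h
  linarith

/-- For all integers `n ≥ k ≥ 1` and every `π ∈ P(n,k)`:
`mak'(π) = n(k-1) - los(π) - linv(F(π),π)`. -/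
theorem mak'_eq_los_linv (n k : ℕ) (hk : 1 ≤ k) (hkn : k ≤ n) (π : SetPartition n k) :
    (π.mak' : ℤ) =
      (n : ℤ) * ((k : ℤ) - 1) - (π.los : ℤ) - (π.linvSet π.closers : ℤ) :=
  mak'_eq_los_linv_general n k π
end

section
/- Let n ≥ 1, k ≥ 0 with k+1 ≤ n, let O ⊆ [n] with 1 ∈ O and #O = k+1, and let i ∈ [k]. Then there exists a bijection φ_i of P(n,k+1;O) onto itself such that stat_i(π) = stat_{i+1}(φ_i(π)) − 1 for every π ∈ P(n,k+1;O). -/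
open Finset Polynomial

/-!
Write `m = max B_{i+1}`. The map `φ` moves `m` into `B_i` unless `B_{i+1} = {m}`, and moves every
element of `B_i` beyond `m` into `B_{i+1}`. It keeps all openers, and since every closer is the
maximum of its block, `rinv(F(π),π) + nrinv(g(B_j),π)` equals the sum of `rinv(g(B_c),π)` over
`c ≠ j` plus the number of elements in blocks to the right of `B_j`. Under `φ` the blocks other than
`B_i, B_{i+1}` keep their maxima and inversion counts, the elements to the right of `B_{i+1}` stay
there, and the new maximum of `B_i` has `rinv = #B_{i+1} - 1 + rinv(m)`: it sees the elements of
`B_{i+1}` before `m` on top of what `m` saw. This gives the shift by one. Finally `φ` is injective,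
hence bijective on the finite set `P(n,k+1;O)`, because `m` is recovered from `φ(π)` as the larger
of the new `max B_i` and `min B_{i+1}`, after which the moves can be undone.
-/

namespace SetPartition

variable {n k : ℕ}

lemma w_injective : Function.Injective (w : SetPartition n k → Fin n → Fin k) := by
  rintro ⟨_, _, _⟩ ⟨_, _, _⟩ h
  cases h
  rfl

def block (π : SetPartition n k) (c : Fin k) : Finset (Fin n) :=
  univ.filter fun a => π.w a = c

lemma block_nonempty (π : SetPartition n k) (c : Fin k) : (π.block c).Nonempty := by
  obtain ⟨a, ha⟩ := π.surj c
  exact ⟨a, mem_filter.2 ⟨mem_univ a, ha⟩⟩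

def blockMin (π : SetPartition n k) (c : Fin k) : Fin n :=
  (π.block c).min' (π.block_nonempty c)

section Blocks

variable (π : SetPartition n k)

lemma w_blockMin (c : Fin k) : π.w (π.blockMin c) = c :=
  (mem_filter.1 ((π.block c).min'_mem _)).2

lemma blockMin_le {c : Fin k} {a : Fin n} (h : π.w a = c) : π.blockMin c ≤ a :=
  min'_le _ _ (mem_filter.2 ⟨mem_univ a, h⟩)

lemma w_blockMax (c : Fin k) : π.w (π.blockMax c) = c :=
  (mem_filter.1 ((π.block c).max'_mem _)).2

lemma le_blockMax {c : Fin k} {a : Fin n} (h : π.w a = c) : a ≤ π.blockMax c :=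
  le_max' _ _ (mem_filter.2 ⟨mem_univ a, h⟩)

lemma blockMax_eq {c : Fin k} {x : Fin n} (hx : π.w x = c) (h : ∀ a, π.w a = c → a ≤ x) :
    π.blockMax c = x :=
  le_antisymm (h _ (π.w_blockMax c)) (π.le_blockMax hx)

lemma blockMin_le_blockMax (c : Fin k) : π.blockMin c ≤ π.blockMax c :=
  π.blockMin_le (π.w_blockMax c)

lemma blockMin_strictMono : StrictMono π.blockMin := fun c d h => by
  obtain ⟨j, hj, hjc⟩ := π.rgf (π.blockMin d) c (by rwa [π.w_blockMin])
  exact (π.blockMin_le hjc).trans_lt hj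

lemma w_lt_of_lt_blockMin {c : Fin k} {a : Fin n} (h : a < π.blockMin c) : π.w a < c := by
  by_contra! hc
  exact (h.trans_le ((π.blockMin_strictMono.monotone hc).trans (π.blockMin_le rfl))).false

lemma mem_openers_iff (a : Fin n) : a ∈ π.openers ↔ π.blockMin (π.w a) = a := by
  simp only [openers, mem_filter, mem_univ, true_and]
  refine ⟨fun h => (π.blockMin_le rfl).eq_or_lt.resolve_right fun hlt => h _ hlt ?_,
    fun h j hj hw => (π.blockMin_le hw).not_gt (by rwa [h])⟩
  exact π.w_blockMin _

lemma mem_closers_iff (a : Fin n) : a ∈ π.closers ↔ π.blockMax (π.w a) = a := by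
  simp only [closers, mem_filter, mem_univ, true_and]
  refine ⟨fun h => ((π.le_blockMax rfl).eq_or_lt.resolve_right fun hlt => h _ hlt ?_).symm,
    fun h j hj hw => (π.le_blockMax hw).not_gt (by rwa [h])⟩
  exact π.w_blockMax _

lemma openers_eq_image : π.openers = univ.image π.blockMin := by
  ext a
  rw [mem_openers_iff, mem_image]
  exact ⟨fun h => ⟨_, mem_univ _, h⟩, by rintro ⟨c, -, rfl⟩; rw [π.w_blockMin]⟩

lemma closers_eq_image : π.closers = univ.image π.blockMax := by
  ext a
  rw [mem_closers_iff, mem_image]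
  exact ⟨fun h => ⟨_, mem_univ _, h⟩, by rintro ⟨c, -, rfl⟩; rw [π.w_blockMax]⟩

lemma rinvSet_closers : π.rinvSet π.closers = ∑ c, π.rinv (π.blockMax c) := by
  rw [rinvSet, closers_eq_image, sum_image]
  intro c _ d _ h
  rw [← π.w_blockMax c, h, π.w_blockMax]

lemma rinv_add_nrinv_blockMax (c : Fin k) :
    π.rinv (π.blockMax c) + π.nrinv (π.blockMax c) = #{a | c < π.w a} := by
  rw [rinv, nrinv, π.w_blockMax, ← card_union_of_disjoint
    (disjoint_filter.2 fun a _ h1 h2 => h1.1.asymm h2.1), ← filter_or]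
  congr 1
  ext a
  simp only [mem_filter, mem_univ, true_and]
  constructor
  · rintro (⟨-, h⟩ | ⟨-, h⟩) <;> exact h
  · intro h
    rcases lt_trichotomy a (π.blockMax c) with hlt | rfl | hgt
    · exact Or.inl ⟨hlt, h⟩
    · rw [π.w_blockMax] at h
      exact absurd h (lt_irrefl c)
    · exact Or.inr ⟨hgt, h⟩

lemma rinvSet_closers_add_nrinv_blockMax (j : Fin k) :
    π.rinvSet π.closers + π.nrinv (π.blockMax j)
      = ∑ c ∈ univ.erase j, π.rinv (π.blockMax c) + #{a | j < π.w a} := by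
  rw [rinvSet_closers, ← sum_erase_add univ _ (mem_univ j), add_assoc, rinv_add_nrinv_blockMax]

lemma card_filter_lt_blockMax_add_one (c : Fin k) :
    #{a | a < π.blockMax c ∧ π.w a = c} + 1 = #(π.block c) := by
  rw [← card_erase_add_one (s := π.block c) (mem_filter.2 ⟨mem_univ _, π.w_blockMax c⟩)]
  congr 2
  ext a
  simp only [block, mem_erase, mem_filter, mem_univ, true_and]
  exact ⟨fun h => ⟨h.1.ne, h.2⟩, fun h => ⟨(π.le_blockMax h.2).lt_of_ne h.1, h.2⟩⟩

end Blocks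

def ofBlockMin (w : Fin n → Fin k) (o : Fin k → Fin n) (ho : StrictMono o)
    (hwo : ∀ c, w (o c) = c) (hle : ∀ a, o (w a) ≤ a) : SetPartition n k where
  w := w
  surj c := ⟨o c, hwo c⟩
  rgf a c hc := ⟨o c, (ho hc).trans_le (hle a), hwo c⟩

lemma blockMin_ofBlockMin (w : Fin n → Fin k) (o : Fin k → Fin n) (ho : StrictMono o)
    (hwo : ∀ c, w (o c) = c) (hle : ∀ a, o (w a) ≤ a) :
    (ofBlockMin w o ho hwo hle).blockMin = o := by
  set π := ofBlockMin w o ho hwo hle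
  funext c
  have h := hle (π.blockMin c)
  rw [show w (π.blockMin c) = c from π.w_blockMin c] at h
  exact le_antisymm (π.blockMin_le (hwo c)) h

section Transfer

variable (π : SetPartition n (k + 1)) (b : Fin k)

lemma card_filter_castSucc_lt (s : Finset (Fin n)) :
    #(s.filter fun a => b.castSucc < π.w a)
      = #(s.filter fun a => π.w a = b.succ) + #(s.filter fun a => b.succ < π.w a) := by
  rw [← card_union_of_disjoint (disjoint_filter.2 fun a _ h1 h2 => (h1 ▸ h2).false),
    ← filter_or]
  simp only [Fin.castSucc_lt_iff_succ_le, le_iff_eq_or_lt, eq_comm]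

def phiW (a : Fin n) : Fin (k + 1) :=
  if a = π.blockMax b.succ ∧ π.blockMin b.succ ≠ a then b.castSucc
  else if π.blockMax b.succ < a ∧ π.w a = b.castSucc then b.succ else π.w a

lemma blockMin_castSucc_lt_blockMax_succ : π.blockMin b.castSucc < π.blockMax b.succ :=
  (π.blockMin_strictMono Fin.castSucc_lt_succ).trans_le (π.blockMin_le_blockMax _)

lemma phiW_blockMin (c : Fin (k + 1)) : phiW π b (π.blockMin c) = c := by
  unfold phiW
  split_ifs with h₁ h₂
  · obtain rfl : c = b.succ := by rw [← π.w_blockMin c, h₁.1, π.w_blockMax]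
    exact absurd rfl h₁.2
  · rw [π.w_blockMin] at h₂
    obtain ⟨h, rfl⟩ := h₂
    exact ((π.blockMin_castSucc_lt_blockMax_succ b).asymm h).elim
  · exact π.w_blockMin c

lemma blockMin_phiW_le (a : Fin n) : π.blockMin (phiW π b a) ≤ a := by
  unfold phiW
  split_ifs with h₁ h₂
  · exact h₁.1 ▸ (π.blockMin_castSucc_lt_blockMax_succ b).le
  · exact (π.blockMin_le_blockMax _).trans h₂.1.le
  · exact π.blockMin_le rfl

def phi : SetPartition n (k + 1) :=
  ofBlockMin (phiW π b) π.blockMin π.blockMin_strictMono (phiW_blockMin π b)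
    (blockMin_phiW_le π b)

lemma phi_w : (π.phi b).w = phiW π b := rfl

lemma blockMin_phi : (π.phi b).blockMin = π.blockMin := blockMin_ofBlockMin ..

lemma openers_phi : (π.phi b).openers = π.openers := by
  rw [openers_eq_image, openers_eq_image, blockMin_phi]

lemma phi_w_eq_or (a : Fin n) :
    (π.phi b).w a = π.w a ∨ (π.phi b).w a = b.castSucc ∧ π.w a = b.succ ∨
      (π.phi b).w a = b.succ ∧ π.w a = b.castSucc := by
  rw [phi_w]
  unfold phiW
  split_ifs with h₁ h₂
  · exact Or.inr (Or.inl ⟨rfl, by rw [h₁.1, π.w_blockMax]⟩)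
  · exact Or.inr (Or.inr ⟨rfl, h₂.2⟩)
  · exact Or.inl rfl

lemma phi_w_of_lt {a : Fin n} (ha : a < π.blockMax b.succ) : (π.phi b).w a = π.w a := by
  rw [phi_w]
  unfold phiW
  rw [if_neg fun h => ha.ne h.1, if_neg fun h => (h.1.trans ha).false]

variable {π b} {c : Fin (k + 1)}

lemma phi_w_eq_iff_of_ne (hc : c ≠ b.castSucc) (hc' : c ≠ b.succ) (a : Fin n) :
    (π.phi b).w a = c ↔ π.w a = c := by
  rcases π.phi_w_eq_or b a with h | ⟨h₁, h₂⟩ | ⟨h₁, h₂⟩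
  · rw [h]
  · rw [h₁, h₂]
    exact iff_of_false hc.symm hc'.symm
  · rw [h₁, h₂]
    exact iff_of_false hc'.symm hc.symm

lemma lt_phi_w_iff_of_ne (hc : c ≠ b.castSucc) (a : Fin n) : c < (π.phi b).w a ↔ c < π.w a := by
  have hlt : c < b.castSucc ↔ c < b.succ := by
    rw [← Fin.le_castSucc_iff, le_iff_lt_or_eq, or_iff_left hc]
  rcases π.phi_w_eq_or b a with h | ⟨h₁, h₂⟩ | ⟨h₁, h₂⟩
  · rw [h]
  · rw [h₁, h₂, hlt]
  · rw [h₁, h₂, hlt]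

lemma blockMax_phi_of_ne (hc : c ≠ b.castSucc) (hc' : c ≠ b.succ) : (π.phi b).blockMax c = π.blockMax c :=
  (π.phi b).blockMax_eq ((phi_w_eq_iff_of_ne hc hc' _).2 (π.w_blockMax c))
    fun _ ha => π.le_blockMax ((phi_w_eq_iff_of_ne hc hc' _).1 ha)

lemma rinv_phi_blockMax_of_ne (hc : c ≠ b.castSucc) (hc' : c ≠ b.succ) :
    (π.phi b).rinv ((π.phi b).blockMax c) = π.rinv (π.blockMax c) := by
  simp only [rinv, blockMax_phi_of_ne hc hc', (phi_w_eq_iff_of_ne hc hc' _).2 (π.w_blockMax c),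
    w_blockMax, lt_phi_w_iff_of_ne hc]

variable (π b)

lemma card_filter_succ_lt_phi_w :
    #{a | b.succ < (π.phi b).w a} = #{a | b.succ < π.w a} := by
  congr 1
  refine filter_congr fun a _ => ?_
  have hle : ¬b.succ < b.castSucc := Fin.castSucc_lt_succ.asymm
  rcases π.phi_w_eq_or b a with h | ⟨h₁, h₂⟩ | ⟨h₁, h₂⟩
  · rw [h]
  · rw [h₁, h₂]
    exact iff_of_false hle (lt_irrefl _)
  · rw [h₁, h₂]
    exact iff_of_false (lt_irrefl _) hle

lemma le_blockMax_succ_of_phi_w_eq {a : Fin n} (h : (π.phi b).w a = b.castSucc) :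
    a ≤ π.blockMax b.succ := by
  rw [phi_w] at h
  unfold phiW at h
  split_ifs at h with h₁ h₂
  · exact h₁.1.le
  · exact absurd h Fin.castSucc_lt_succ.ne'
  · exact not_lt.1 fun hm => h₂ ⟨hm, h⟩

lemma blockMax_phi_castSucc (h : π.blockMin b.succ ≠ π.blockMax b.succ) :
    (π.phi b).blockMax b.castSucc = π.blockMax b.succ :=
  (π.phi b).blockMax_eq (by rw [phi_w]; unfold phiW; rw [if_pos ⟨rfl, h⟩])
    fun _ ha => π.le_blockMax_succ_of_phi_w_eq b ha

lemma blockMax_phi_castSucc_lt (h : π.blockMin b.succ = π.blockMax b.succ) :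
    (π.phi b).blockMax b.castSucc < π.blockMin b.succ := by
  rw [h]
  refine (π.le_blockMax_succ_of_phi_w_eq b ((π.phi b).w_blockMax _)).lt_of_ne fun heq => ?_
  have hw := (π.phi b).w_blockMax b.castSucc
  rw [heq, phi_w] at hw
  unfold phiW at hw
  rw [if_neg fun h' => h'.2 h, if_neg fun h' => h'.1.false, π.w_blockMax] at hw
  exact Fin.castSucc_lt_succ.ne' hw

lemma max_blockMax_phi_blockMin :
    max ((π.phi b).blockMax b.castSucc) (π.blockMin b.succ) = π.blockMax b.succ := by
  by_cases h : π.blockMin b.succ = π.blockMax b.succ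
  · rw [max_eq_right (π.blockMax_phi_castSucc_lt b h).le, h]
  · rw [π.blockMax_phi_castSucc b h, max_eq_left (π.blockMin_le_blockMax _)]

lemma w_eq_ite_phi_w (a : Fin n) :
    π.w a = if a = π.blockMax b.succ then b.succ
      else if π.blockMax b.succ < a ∧ (π.phi b).w a = b.succ then b.castSucc
      else (π.phi b).w a := by
  have hgt : π.blockMax b.succ < a → π.w a ≠ b.succ := fun ha h => (π.le_blockMax h).not_gt ha
  rw [phi_w]
  unfold phiW
  split_ifs <;> simp_all [π.w_blockMax]

lemma phi_injective : Function.Injective fun π : SetPartition n (k + 1) => π.phi b := by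
  intro π₁ π₂ h
  dsimp only at h
  have hmin : π₁.blockMin = π₂.blockMin := by rw [← blockMin_phi π₁ b, h, blockMin_phi]
  have hmax : π₁.blockMax b.succ = π₂.blockMax b.succ := by
    rw [← max_blockMax_phi_blockMin, ← max_blockMax_phi_blockMin, h, hmin]
  exact w_injective (funext fun a => by rw [π₁.w_eq_ite_phi_w b, π₂.w_eq_ite_phi_w b, hmax, h])

lemma rinv_phi_blockMax_castSucc :
    (π.phi b).rinv ((π.phi b).blockMax b.castSucc)
      = #{a | a < π.blockMax b.succ ∧ b.castSucc < π.w a} := by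
  rw [rinv, (π.phi b).w_blockMax]
  by_cases h : π.blockMin b.succ = π.blockMax b.succ
  · have hx := π.blockMax_phi_castSucc_lt b h
    have hle : ∀ a, a < π.blockMin b.succ → ¬b.castSucc < π.w a := fun a ha hlt =>
      (Fin.castSucc_lt_iff_succ_le.1 hlt).not_gt (π.w_lt_of_lt_blockMin ha)
    rw [← h, card_eq_zero.2 (filter_eq_empty_iff.2 ?_), card_eq_zero.2 (filter_eq_empty_iff.2 ?_)]
    · rintro a - ⟨ha, hlt⟩
      exact hle a ha hlt
    · rintro a - ⟨ha, hlt⟩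
      rw [π.phi_w_of_lt b ((ha.trans hx).trans_le (π.blockMin_le_blockMax _))] at hlt
      exact hle a (ha.trans hx) hlt
  · rw [π.blockMax_phi_castSucc b h]
    exact congrArg card (filter_congr fun a _ => and_congr_right fun ha => by
      rw [π.phi_w_of_lt b ha])

lemma rinv_phi_blockMax_castSucc_add_one :
    (π.phi b).rinv ((π.phi b).blockMax b.castSucc) + 1
      = #(π.block b.succ) + π.rinv (π.blockMax b.succ) := by
  have hsplit := π.card_filter_castSucc_lt b (univ.filter (· < π.blockMax b.succ))
  simp only [filter_filter] at hsplit
  rw [rinv_phi_blockMax_castSucc, hsplit, ← card_filter_lt_blockMax_add_one, rinv, π.w_blockMax]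
  omega

theorem rinvSet_closers_add_nrinv_phi :
    (π.phi b).rinvSet (π.phi b).closers + (π.phi b).nrinv ((π.phi b).blockMax b.succ) + 1
      = π.rinvSet π.closers + π.nrinv (π.blockMax b.castSucc) := by
  have hne : b.castSucc ≠ b.succ := Fin.castSucc_lt_succ.ne
  have hsum : ∑ c ∈ (univ.erase b.succ).erase b.castSucc, (π.phi b).rinv ((π.phi b).blockMax c)
      = ∑ c ∈ (univ.erase b.castSucc).erase b.succ, π.rinv (π.blockMax c) := by
    rw [erase_right_comm]
    refine sum_congr rfl fun c hc => ?_
    simp only [mem_erase] at hc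
    exact rinv_phi_blockMax_of_ne hc.2.1 hc.1
  rw [rinvSet_closers_add_nrinv_blockMax, rinvSet_closers_add_nrinv_blockMax,
    ← add_sum_erase _ _ (mem_erase.2 ⟨hne, mem_univ _⟩),
    ← add_sum_erase _ _ (mem_erase.2 ⟨hne.symm, mem_univ _⟩), hsum, card_filter_succ_lt_phi_w,
    card_filter_castSucc_lt]
  have := π.rinv_phi_blockMax_castSucc_add_one b
  simp only [block] at this
  omega

end Transfer

end SetPartition

/-- Let `n ≥ 1`, `k ≥ 0` with `k+1 ≤ n`, let `O ⊆ [n]` with `1 ∈ O` and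
`#O = k+1`, and let `i ∈ [k]`. Then there is a bijection `φᵢ` of `P(n,k+1;O)` (partitions
with set of openers `O`) onto itself with `stat_i(π) = stat_{i+1}(φᵢ(π)) - 1` for all `π`,
where `stat_j(π) = k - rinv(F(π),π) - nrinv(g(B_j),π)` (the block `B_j` having
Fin-index `j - 1`). -/
theorem exists_bijection_stat_shift (n k : ℕ) (O : Finset (Fin n)) (i : ℕ) (hi1 : 1 ≤ i)
    (hik : i ≤ k) :
    ∃ φ : {π : SetPartition n (k + 1) // π.openers = O} →
          {π : SetPartition n (k + 1) // π.openers = O},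
      Function.Bijective φ ∧
      ∀ π : {π : SetPartition n (k + 1) // π.openers = O},
        (k : ℤ) - (π.1.rinvSet π.1.closers : ℤ)
            - (π.1.nrinv (π.1.blockMax ⟨i - 1, by omega⟩) : ℤ) =
          ((k : ℤ) - ((φ π).1.rinvSet (φ π).1.closers : ℤ)
            - ((φ π).1.nrinv ((φ π).1.blockMax ⟨i, by omega⟩) : ℤ)) - 1 := by
  set b : Fin k := ⟨i - 1, by omega⟩
  have hb : (⟨i - 1, by omega⟩ : Fin (k + 1)) = b.castSucc := rfl
  have hb' : (⟨i, by omega⟩ : Fin (k + 1)) = b.succ := Fin.ext (by simp [b]; omega)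
  rw [hb, hb']
  refine ⟨fun π => ⟨π.1.phi b, (π.1.openers_phi b).trans π.2⟩,
    Finite.injective_iff_bijective.1 fun π₁ π₂ h =>
      Subtype.ext (SetPartition.phi_injective b (congrArg Subtype.val h)), fun π => ?_⟩
  have := π.1.rinvSet_closers_add_nrinv_phi b
  dsimp only
  omega
end
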